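/- arXiv:1508.07827 — 3 statements merged into one kernel-verified Lean document; each statement's English description precedes it below -/
import Mathlib

section
/- Let g be a piecewise constant survival distribution function with division points 0 = t_0 < t_1 < ⋯ < t_N < t_{N+1} = ∞, and let B be a standard barrier with P(τ_B > t) = g(t) for all t ≥ 0. Then u(t,x) := P(W_t ≤ x, τ_B > t) satisfies the inductive scheme: u(0,x) = 1 if x ≥ 0 and u(0,x) = 0 if x < 0; for each k ≥ 0 and t ∈ (t_k, t_{k+1}), u(t,x) = E[u(t_k, x + W_{t−t_k})]; and for each k with 0 ≤ k ≤ N−1 (and k = N−1 replaced appropriately, i.e. all k ≥ 0 with t_{k+1} < ∞), u(t_{k+1}, x) = min{E[u(t_k, x + W_{t_{k+1}−t_k})], g(t_{k+1})}. -/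
open MeasureTheory ProbabilityTheory Filter Set

noncomputable section

/-- A barrier: a closed subset of `[0,∞) × ℝ` closed upwards in the space variable. -/
def IsBarrier (B : Set (ℝ × ℝ)) : Prop :=
  IsClosed B ∧ (∀ p ∈ B, 0 ≤ p.1) ∧ ∀ t x y : ℝ, (t, x) ∈ B → x ≤ y → (t, y) ∈ B

/-- The boundary function `b(t) = inf {x : (t,x) ∈ B}` of a barrier (with `inf ∅ = ∞`). -/
def boundary (B : Set (ℝ × ℝ)) (t : ℝ) : EReal :=
  ⨅ x ∈ {x : ℝ | (t, x) ∈ B}, (x : EReal)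

/-- A standard barrier: `b(0) = 0` and once the boundary is `-∞` it stays `-∞`. -/
def IsStandardBarrier (B : Set (ℝ × ℝ)) : Prop :=
  IsBarrier B ∧ boundary B 0 = 0 ∧
    ∀ t s : ℝ, 0 < t → boundary B t = ⊥ → t < s → boundary B s = ⊥

/-- A standard Brownian motion: continuous paths, `W₀ = 0` a.s., Gaussian increments
`W_t - W_s ~ N(0, t-s)` independent of the past. -/
structure IsStandardBM {Ω : Type*} [MeasurableSpace Ω] (P : Measure Ω)
    (W : ℝ → Ω → ℝ) : Prop where
  meas : ∀ t, StronglyMeasurable (W t)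
  cont : ∀ ω, Continuous fun t => W t ω
  init : ∀ᵐ ω ∂P, W 0 ω = 0
  incr : ∀ s t : ℝ, 0 ≤ s → s ≤ t →
    P.map (fun ω => W t ω - W s ω) = gaussianReal 0 (Real.toNNReal (t - s))
  indep : ∀ s t : ℝ, 0 ≤ s → s ≤ t →
    Indep (MeasurableSpace.comap (fun ω => W t ω - W s ω) inferInstance)
      (⨆ u : Set.Icc (0 : ℝ) s, MeasurableSpace.comap (W u) inferInstance) P

/-- The first passage time `τ_B = inf {t > 0 : W_t ≥ b(t)}` (with values in `EReal`,
`inf ∅ = ∞`). -/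
def tauB {Ω : Type*} (B : Set (ℝ × ℝ)) (W : ℝ → Ω → ℝ) (ω : Ω) : EReal :=
  ⨅ r : {r : ℝ // 0 < r ∧ boundary B r ≤ ((W r ω : ℝ) : EReal)}, ((r.1 : ℝ) : EReal)

/-- The survival distribution function `g(t) = P(τ_B > t)` of a barrier. -/
def survival {Ω : Type*} [MeasurableSpace Ω] (P : Measure Ω) (B : Set (ℝ × ℝ))
    (W : ℝ → Ω → ℝ) (t : ℝ) : ℝ :=
  (P {ω | (t : EReal) < tauB B W ω}).toReal

/-- `u(t,x) = P(W_t ≤ x, τ_B > t)`. -/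
def uFun {Ω : Type*} [MeasurableSpace Ω] (P : Measure Ω) (B : Set (ℝ × ℝ))
    (W : ℝ → Ω → ℝ) (t x : ℝ) : ℝ :=
  (P {ω | W t ω ≤ x ∧ (t : EReal) < tauB B W ω}).toReal

/-- A survival distribution function. -/
structure IsSurvival (g : ℝ → ℝ) : Prop where
  mono : AntitoneOn g (Set.Ici 0)
  rc : ∀ t : ℝ, 0 ≤ t → ContinuousWithinAt g (Set.Ici t) t
  init : g 0 = 1
  mem : ∀ t : ℝ, 0 ≤ t → g t ∈ Set.Icc (0 : ℝ) 1

/-- The value `v(t,x)` of the optimal stopping problem associated with a survival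
distribution function `g`: the infimum over stopping times `γ` of the natural filtration
of `W` with values in `[0,t]` of `E[g(t-γ) 1_{γ<t} + 1_{γ=t, x+W_t ≥ 0}]`. -/
def stopValue {Ω : Type*} [MeasurableSpace Ω] (P : Measure Ω) (W : ℝ → Ω → ℝ)
    (hW : ∀ s, StronglyMeasurable (W s)) (g : ℝ → ℝ) (t x : ℝ) : ℝ :=
  ⨅ γ : {γ : Ω → ℝ // IsStoppingTime (Filtration.natural W hW) (fun ω => (γ ω : WithTop ℝ)) ∧
      ∀ ω, γ ω ∈ Set.Icc 0 t},
    ∫ ω, ({ω' | γ.1 ω' < t}.indicator (fun ω' => g (t - γ.1 ω')) ω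
      + {ω' | γ.1 ω' = t ∧ 0 ≤ x + W t ω'}.indicator 1 ω) ∂P

/-!
For `s > 0` the event `{τ_B > s}` is the event that the path avoids `B` on `(0, s]`; it is
measurable with respect to the past of `W` up to time `s`, so the independent Gaussian increment
`W_t - W_s` gives `P(W_t ≤ x, τ_B > s) = E[u(s, x + W_{t-s})]`. When `g` is constant on `[s, t)`
the events `{τ_B > r}`, `r ∈ [s, t)`, agree with `{τ_B > s}` up to null sets. Inside
`(t_k, t_{k+1})` this gives `u(t, x) = P(W_t ≤ x, τ_B > t_k)`. At a jump time `t = t_{k+1}`,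
`{τ_B > t}` is the event that the path avoids `B` on `(0, t)`, minus `{W_t ≥ b(t)}`: for
`x < b(t)` this removes nothing from `{W_t ≤ x}`, and for `b(t) ≤ x` it forces `W_t < b(t) ≤ x`.
Hence `u(t, x)` is the smaller of `E[u(t_k, x + W_{t-t_k})]` and `g(t)`.
-/

open scoped ENNReal Topology

section FirstPassage

variable {Ω : Type*} {B : Set (ℝ × ℝ)} {W : ℝ → Ω → ℝ}

lemma ProbabilityTheory.Indep.measure_add_le_inter_eq_lintegral {m mΩ : MeasurableSpace Ω}
    {P : Measure Ω} [IsFiniteMeasure P] {D Y : Ω → ℝ} {A : Set Ω} (hm : m ≤ mΩ)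
    (hD : Measurable D) (hY : Measurable[m] Y) (hA : MeasurableSet[m] A)
    (hind : Indep (MeasurableSpace.comap D inferInstance) m P) (x : ℝ) :
    P ({ω | Y ω + D ω ≤ x} ∩ A) = ∫⁻ z, P ({ω | Y ω ≤ x - z} ∩ A) ∂(P.map D) := by
  set V : Ω → ℝ × Prop := fun ω => (Y ω, ω ∈ A)
  have hVm : Measurable[m] V := hY.prodMk (@measurableSet_setOfPred _ m _ |>.1 hA)
  have hV : Measurable V := hVm.mono hm le_rfl
  have hDV : IndepFun D V P := indep_of_indep_of_le_right hind hVm.comap_le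
  set S : Set (ℝ × ℝ × Prop) := {p | p.2.1 + p.1 ≤ x ∧ p.2.2}
  have hS : MeasurableSet S :=
    (measurableSet_le (measurable_snd.fst.add measurable_fst) measurable_const).inter
      (measurableSet_setOfPred.2 measurable_snd.snd)
  calc P ({ω | Y ω + D ω ≤ x} ∩ A) = P.map (fun ω => (D ω, V ω)) S :=
        (Measure.map_apply (hD.prodMk hV) hS).symm
    _ = ((P.map D).prod (P.map V)) S := by
        rw [(indepFun_iff_map_prod_eq_prod_map_map hD.aemeasurable hV.aemeasurable).1 hDV]
    _ = ∫⁻ z, P.map V (Prod.mk z ⁻¹' S) ∂(P.map D) := Measure.prod_apply hS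
    _ = ∫⁻ z, P ({ω | Y ω ≤ x - z} ∩ A) ∂(P.map D) := by
        refine lintegral_congr fun z => ?_
        rw [Measure.map_apply hV (measurable_prodMk_left hS)]
        congr 1
        ext ω
        simp [S, V, le_sub_iff_add_le]

lemma IsBarrier.mem_iff_boundary_le (hB : IsBarrier B) (t x : ℝ) :
    (t, x) ∈ B ↔ boundary B t ≤ x := by
  refine ⟨fun h => iInf₂_le x h, fun h => ?_⟩
  have hslice : IsClosed {y : ℝ | (t, y) ∈ B} := hB.1.preimage (Continuous.prodMk_right t)
  have habove : ∀ ε > 0, (t, x + ε) ∈ B := by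
    intro ε hε
    obtain ⟨y, hy, hyx⟩ := lt_biInf_iff.1
      (h.trans_lt (EReal.coe_lt_coe_iff.2 (lt_add_of_pos_right x hε)))
    exact hB.2.2 t y _ hy (EReal.coe_le_coe_iff.1 hyx.le)
  have hlim : Tendsto (fun ε => x + ε) (𝓝[>] 0) (𝓝 x) :=
    tendsto_nhdsWithin_of_tendsto_nhds (by simpa using (continuous_const_add x).tendsto 0)
  exact hslice.mem_of_tendsto hlim (eventually_mem_nhdsWithin.mono habove)

variable (B W) in
def survivesThrough (s : ℝ) : Set Ω :=
  {ω | ∀ r ∈ Ioc 0 s, (r, W r ω) ∉ B}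

variable (B W) in
def survivesBefore (t : ℝ) : Set Ω :=
  {ω | ∀ r ∈ Ioo 0 t, (r, W r ω) ∉ B}

lemma survivesThrough_zero : survivesThrough B W 0 = univ :=
  eq_univ_of_forall fun _ _ hr => absurd hr.2 hr.1.not_ge

lemma survivesThrough_anti : Antitone (survivesThrough B W) :=
  fun _ _ hst _ hω r hr => hω r ⟨hr.1, hr.2.trans hst⟩

lemma survivesBefore_eq_iInter {t : ℝ} {r : ℕ → ℝ} (hrt : ∀ n, r n < t)
    (hlim : Tendsto r atTop (𝓝 t)) :
    survivesBefore B W t = ⋂ n, survivesThrough B W (r n) := by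
  ext ω
  simp only [survivesBefore, survivesThrough, mem_iInter, mem_ofPred_eq]
  refine ⟨fun hω n q hq => hω q ⟨hq.1, hq.2.trans_lt (hrt n)⟩, fun hω q hq => ?_⟩
  obtain ⟨n, hn⟩ := (hlim.eventually (lt_mem_nhds hq.2)).exists
  exact hω n q ⟨hq.1, hn.le⟩

lemma mem_survivesThrough_iff {t : ℝ} (ht : 0 < t) {ω : Ω} :
    ω ∈ survivesThrough B W t ↔ ω ∈ survivesBefore B W t ∧ (t, W t ω) ∉ B := by
  refine ⟨fun hω => ⟨fun r hr => hω r (Ioo_subset_Ioc_self hr), hω t ⟨ht, le_rfl⟩⟩, ?_⟩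
  rintro ⟨hbefore, hat⟩ r ⟨hr0, hrt⟩
  rcases hrt.lt_or_eq with hrt | rfl
  exacts [hbefore r ⟨hr0, hrt⟩, hat]

/-- The two cases are `x < b(t)` and `b(t) ≤ x`. -/
lemma inter_survivesThrough_eq_or_subset (hB : IsBarrier B) {t : ℝ} (ht : 0 < t) (x : ℝ) :
    {ω | W t ω ≤ x} ∩ survivesThrough B W t = {ω | W t ω ≤ x} ∩ survivesBefore B W t ∨
      survivesThrough B W t ⊆ {ω | W t ω ≤ x} := by
  by_cases hx : (x : EReal) < boundary B t
  · left
    ext ω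
    simp only [mem_inter_iff, mem_ofPred_eq, mem_survivesThrough_iff ht, hB.mem_iff_boundary_le]
    refine ⟨fun h => ⟨h.1, h.2.1⟩, fun h => ⟨h.1, h.2, fun hb => ?_⟩⟩
    exact (hb.trans (EReal.coe_le_coe_iff.2 h.1)).not_gt hx
  · right
    intro ω hω
    have hbelow : ((W t ω : ℝ) : EReal) < boundary B t :=
      not_le.1 fun hb => hω t ⟨ht, le_rfl⟩ ((hB.mem_iff_boundary_le t _).2 hb)
    exact EReal.coe_le_coe_iff.1 (hbelow.trans_le (not_lt.1 hx)).le

lemma coe_lt_tauB_iff (hB : IsBarrier B) (hW : ∀ ω, Continuous fun t => W t ω) {s : ℝ}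
    (hs : 0 < s) (ω : Ω) : (s : EReal) < tauB B W ω ↔ ω ∈ survivesThrough B W s := by
  constructor
  · rintro h r ⟨hr0, hrs⟩ hit
    have hτ : tauB B W ω ≤ r := iInf_le_of_le ⟨r, hr0, (hB.mem_iff_boundary_le r _).1 hit⟩ le_rfl
    exact (h.trans_le hτ).not_ge (EReal.coe_le_coe_iff.2 hrs)
  · intro hω
    -- the hitting times form a closed set, which thus avoids a whole neighbourhood of `s`
    have hclosed : IsClosed {r : ℝ | (r, W r ω) ∈ B} :=
      hB.1.preimage (continuous_id.prodMk (hW ω))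
    obtain ⟨ε, hε, hball⟩ := Metric.isOpen_iff.1 hclosed.isOpen_compl s (hω s ⟨hs, le_rfl⟩)
    have hτ : ((s + ε : ℝ) : EReal) ≤ tauB B W ω := by
      refine le_iInf fun r => EReal.coe_le_coe_iff.2 ?_
      have hit : (r.1, W r.1 ω) ∈ B := (hB.mem_iff_boundary_le _ _).2 r.2.2
      have hsr : s < r.1 := not_le.1 fun h => hω r.1 ⟨r.2.1, h⟩ hit
      have hfar : r.1 ∉ Metric.ball s ε := fun h => hball h hit
      rw [Real.ball_eq_Ioo, mem_Ioo, not_and_or, not_lt, not_lt] at hfar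
      rcases hfar with h | h <;> linarith
    exact (EReal.coe_lt_coe_iff.2 (lt_add_of_pos_right s hε)).trans_le hτ

variable (W) in
abbrev pastSigma (s : ℝ) : MeasurableSpace Ω :=
  ⨆ u : Icc (0 : ℝ) s, MeasurableSpace.comap (W u) inferInstance

lemma measurable_pastSigma {r s : ℝ} (hr : r ∈ Icc 0 s) : Measurable[pastSigma W s] (W r) :=
  (comap_measurable (W r)).mono
    (le_iSup (fun u : Icc (0 : ℝ) s => MeasurableSpace.comap (W u) inferInstance) ⟨r, hr⟩) le_rfl

lemma measurableSet_pastSigma_exists_mem_Icc (hB : IsClosed B)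
    (hW : ∀ ω, Continuous fun t => W t ω) {a s : ℝ} (ha : 0 ≤ a) :
    MeasurableSet[pastSigma W s] {ω | ∃ r ∈ Icc a s, (r, W r ω) ∈ B} := by
  rcases lt_or_ge s a with hsa | has
  · simp [Icc_eq_empty_of_lt hsa]
  have : Nonempty (Icc a s) := ⟨⟨a, left_mem_Icc.2 has⟩⟩
  set d : Icc a s → Ω → ℝ≥0∞ := fun r ω => Metric.infEDist ((r : ℝ), W r ω) B
  have hd : ∀ ω, Continuous fun r => d r ω := fun ω =>
    Metric.continuous_infEDist.comp
      (continuous_subtype_val.prodMk ((hW ω).comp continuous_subtype_val))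
  -- on the compact interval the distance to `B` attains its infimum, which only needs to be
  -- computed along a countable dense sequence
  have hhit : {ω | ∃ r ∈ Icc a s, (r, W r ω) ∈ B} =
      {ω | ⨅ m, d (TopologicalSpace.denseSeq (Icc a s) m) ω = 0} := by
    ext ω
    rw [mem_ofPred_eq, mem_ofPred_eq, ← iInf_range' (fun r => d r ω),
      (TopologicalSpace.denseRange_denseSeq _).ciInf (hd ω) (OrderBot.bddBelow _)]
    constructor
    · rintro ⟨r, hr, hit⟩
      have hr0 : d ⟨r, hr⟩ ω = 0 := Metric.infEDist_zero_of_mem hit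
      exact nonpos_iff_eq_zero.1 (hr0 ▸ iInf_le (fun r' => d r' ω) ⟨r, hr⟩)
    · intro h
      obtain ⟨r, hr⟩ := (isCompact_univ.exists_isMinOn univ_nonempty (hd ω).continuousOn)
      refine ⟨r, r.2, (Metric.mem_iff_infEDist_zero_of_closed hB).2 ?_⟩
      exact nonpos_iff_eq_zero.1 (h ▸ le_iInf fun r' => hr.2 (mem_univ r'))
  rw [hhit]
  refine (Measurable.iInf fun m => ?_) (measurableSet_singleton 0)
  obtain ⟨r, hr⟩ := TopologicalSpace.denseSeq (Icc a s) m
  exact (Metric.continuous_infEDist.comp (Continuous.prodMk_right r)).measurable.comp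
    (measurable_pastSigma ⟨ha.trans hr.1, hr.2⟩)

lemma measurableSet_pastSigma_survivesThrough (hB : IsClosed B)
    (hW : ∀ ω, Continuous fun t => W t ω) (s : ℝ) :
    MeasurableSet[pastSigma W s] (survivesThrough B W s) := by
  have hcompl : (survivesThrough B W s)ᶜ =
      ⋃ n : ℕ, {ω | ∃ r ∈ Icc (1 / (n + 1 : ℝ)) s, (r, W r ω) ∈ B} := by
    ext ω
    simp only [survivesThrough, mem_compl_iff, mem_ofPred_eq, mem_iUnion, not_forall, not_not,
      exists_prop]
    constructor
    · rintro ⟨r, ⟨hr0, hrs⟩, hit⟩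
      obtain ⟨n, hn⟩ := exists_nat_one_div_lt hr0
      exact ⟨n, r, ⟨hn.le, hrs⟩, hit⟩
    · rintro ⟨n, r, ⟨hnr, hrs⟩, hit⟩
      exact ⟨r, ⟨(Nat.one_div_pos_of_nat).trans_le hnr, hrs⟩, hit⟩
  rw [← compl_compl (survivesThrough B W s), hcompl]
  exact (MeasurableSet.iUnion fun n =>
    measurableSet_pastSigma_exists_mem_Icc hB hW (by positivity)).compl

variable [mΩ : MeasurableSpace Ω]

lemma pastSigma_le (hW : ∀ t, StronglyMeasurable (W t)) (s : ℝ) : pastSigma W s ≤ mΩ :=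
  iSup_le fun u => (hW u).measurable.comap_le

lemma measurableSet_survivesThrough (hB : IsClosed B) (hWm : ∀ t, StronglyMeasurable (W t))
    (hW : ∀ ω, Continuous fun t => W t ω) (s : ℝ) : MeasurableSet (survivesThrough B W s) :=
  pastSigma_le hWm s _ (measurableSet_pastSigma_survivesThrough hB hW s)

lemma measurableSet_coe_lt_tauB (hB : IsBarrier B) (hWm : ∀ t, StronglyMeasurable (W t))
    (hW : ∀ ω, Continuous fun t => W t ω) {s : ℝ} (hs : 0 ≤ s) :
    MeasurableSet {ω | (s : EReal) < tauB B W ω} := by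
  have hunion : {ω | (s : EReal) < tauB B W ω} =
      ⋃ n : ℕ, survivesThrough B W (s + 1 / (n + 1)) := by
    ext ω
    simp only [mem_ofPred_eq, mem_iUnion]
    refine ⟨fun h => ?_, fun ⟨n, hn⟩ => ?_⟩
    · obtain ⟨y, hsy, hyτ⟩ := EReal.lt_iff_exists_real_btwn.1 h
      obtain ⟨n, hn⟩ := exists_nat_one_div_lt (sub_pos.2 (EReal.coe_lt_coe_iff.1 hsy))
      refine ⟨n, (coe_lt_tauB_iff hB hW (by positivity) ω).1 (lt_trans ?_ hyτ)⟩
      exact EReal.coe_lt_coe_iff.2 (by linarith)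
    · refine lt_trans ?_ ((coe_lt_tauB_iff hB hW (by positivity) ω).2 hn)
      exact EReal.coe_lt_coe_iff.2 (lt_add_of_pos_right s Nat.one_div_pos_of_nat)
  rw [hunion]
  exact MeasurableSet.iUnion fun n =>
    measurableSet_survivesThrough hB.1 hWm hW _

namespace IsStandardBM

variable {P : Measure Ω}

lemma map_eq_gaussianReal (hBM : IsStandardBM P W) {t : ℝ} (ht : 0 ≤ t) :
    P.map (W t) = gaussianReal 0 t.toNNReal := by
  have hW0 : (fun ω => W t ω - W 0 ω) =ᵐ[P] W t := by
    filter_upwards [hBM.init] with ω h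
    rw [h, sub_zero]
  rw [← Measure.map_congr hW0, hBM.incr 0 t le_rfl ht, sub_zero]

/-- `W t = W s + (W t - W s)`, where the increment is independent of the past and has the
symmetric law of `W (t - s)`. -/
lemma measure_le_inter_eq_integral [IsProbabilityMeasure P] (hBM : IsStandardBM P W)
    {s t : ℝ} (hs : 0 ≤ s) (hst : s ≤ t) {A : Set Ω} (hA : MeasurableSet[pastSigma W s] A)
    (x : ℝ) :
    (P ({ω | W t ω ≤ x} ∩ A)).toReal =
      ∫ ω, (P ({ω' | W s ω' ≤ x + W (t - s) ω} ∩ A)).toReal ∂P := by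
  set F : ℝ → ℝ≥0∞ := fun y => P ({ω | W s ω ≤ y} ∩ A)
  have hF : Monotone F := fun y y' h =>
    measure_mono (inter_subset_inter_left _ fun ω (hω : W s ω ≤ y) => hω.trans h)
  have hWm : ∀ r, Measurable (W r) := fun r => (hBM.meas r).measurable
  have hdecomp := (hBM.indep s t hs hst).measure_add_le_inter_eq_lintegral
    (D := fun ω => W t ω - W s ω) (pastSigma_le hBM.meas s) ((hWm t).sub (hWm s))
    (measurable_pastSigma ⟨hs, le_rfl⟩) hA x
  simp only [add_sub_cancel] at hdecomp
  have hsymm : (gaussianReal 0 (t - s).toNNReal).map (fun z => -z) =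
      gaussianReal 0 (t - s).toNNReal := by
    rw [gaussianReal_map_neg, neg_zero]
  have hFx : Monotone fun y => F (x + y) := fun _ _ h => hF (by linarith)
  calc (P ({ω | W t ω ≤ x} ∩ A)).toReal
      = (∫⁻ z, F (x - z) ∂(gaussianReal 0 (t - s).toNNReal)).toReal := by
        rw [hdecomp, hBM.incr s t hs hst]
    _ = (∫⁻ z, F (x + z) ∂(gaussianReal 0 (t - s).toNNReal)).toReal := by
        conv_lhs => rw [← hsymm]
        have hFx' : Antitone fun z => F (x - z) := fun _ _ h => hF (by linarith)
        rw [lintegral_map hFx'.measurable measurable_neg]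
        simp only [sub_neg_eq_add]
    _ = (∫⁻ ω, F (x + W (t - s) ω) ∂P).toReal := by
        rw [← hBM.map_eq_gaussianReal (sub_nonneg.2 hst), lintegral_map hFx.measurable (hWm _)]
    _ = ∫ ω, (F (x + W (t - s) ω)).toReal ∂P :=
        (integral_toReal (hFx.measurable.comp (hWm _)).aemeasurable
          (ae_of_all _ fun _ => measure_lt_top P _)).symm

end IsStandardBM

variable {P : Measure Ω}

lemma setOf_coe_lt_tauB_ae_eq (hB : IsBarrier B) (hW : ∀ ω, Continuous fun t => W t ω)
    (hτ0 : ∀ᵐ ω ∂P, ((0 : ℝ) : EReal) < tauB B W ω) {s : ℝ} (hs : 0 ≤ s) :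
    {ω | (s : EReal) < tauB B W ω} =ᵐ[P] survivesThrough B W s := by
  rcases hs.eq_or_lt with rfl | hs
  · rw [survivesThrough_zero]
    exact eventuallyEq_univ.2 hτ0
  · exact EventuallyEq.of_eq (ext fun ω => coe_lt_tauB_iff hB hW hs ω)

lemma uFun_eq_measure_survivesThrough (hB : IsBarrier B) (hW : ∀ ω, Continuous fun t => W t ω)
    (hτ0 : ∀ᵐ ω ∂P, ((0 : ℝ) : EReal) < tauB B W ω) {s : ℝ} (hs : 0 ≤ s) (x : ℝ) :
    uFun P B W s x = (P ({ω | W s ω ≤ x} ∩ survivesThrough B W s)).toReal :=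
  congrArg ENNReal.toReal <| measure_congr <|
    (EventuallyEq.refl _ _).inter (setOf_coe_lt_tauB_ae_eq hB hW hτ0 hs)

lemma survival_eq_measure_survivesThrough (hB : IsBarrier B)
    (hW : ∀ ω, Continuous fun t => W t ω) (hτ0 : ∀ᵐ ω ∂P, ((0 : ℝ) : EReal) < tauB B W ω)
    {s : ℝ} (hs : 0 ≤ s) : survival P B W s = (P (survivesThrough B W s)).toReal :=
  congrArg ENNReal.toReal <| measure_congr <| setOf_coe_lt_tauB_ae_eq hB hW hτ0 hs

variable [IsProbabilityMeasure P]

lemma ae_zero_lt_tauB (hB : IsBarrier B) (hBM : IsStandardBM P W)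
    (h0 : survival P B W 0 = 1) : ∀ᵐ ω ∂P, ((0 : ℝ) : EReal) < tauB B W ω := by
  rw [ae_iff_measure_eq
    (measurableSet_coe_lt_tauB hB hBM.meas hBM.cont le_rfl).nullMeasurableSet, measure_univ]
  exact (ENNReal.toReal_eq_one_iff _).1 h0

lemma survivesThrough_ae_eq_of_survival_eq (hB : IsBarrier B) (hBM : IsStandardBM P W)
    (hτ0 : ∀ᵐ ω ∂P, ((0 : ℝ) : EReal) < tauB B W ω) {s t : ℝ} (hs : 0 ≤ s) (hst : s ≤ t)
    (hg : survival P B W t = survival P B W s) :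
    survivesThrough B W t =ᵐ[P] survivesThrough B W s := by
  rw [survival_eq_measure_survivesThrough hB hBM.cont hτ0 (hs.trans hst),
    survival_eq_measure_survivesThrough hB hBM.cont hτ0 hs,
    ENNReal.toReal_eq_toReal_iff' (measure_ne_top _ _) (measure_ne_top _ _)] at hg
  exact ae_eq_of_subset_of_measure_ge (survivesThrough_anti hst) hg.ge
    (measurableSet_survivesThrough hB.1 hBM.meas hBM.cont t).nullMeasurableSet
    (measure_ne_top _ _)

lemma uFun_eq_integral_of_survival_eq (hB : IsBarrier B) (hBM : IsStandardBM P W)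
    (hτ0 : ∀ᵐ ω ∂P, ((0 : ℝ) : EReal) < tauB B W ω) {s t : ℝ} (hs : 0 ≤ s) (hst : s ≤ t)
    (hg : survival P B W t = survival P B W s) (x : ℝ) :
    uFun P B W t x = ∫ ω, uFun P B W s (x + W (t - s) ω) ∂P := by
  rw [uFun_eq_measure_survivesThrough hB hBM.cont hτ0 (hs.trans hst),
    measure_congr ((EventuallyEq.refl _ _).inter
      (survivesThrough_ae_eq_of_survival_eq hB hBM hτ0 hs hst hg)),
    hBM.measure_le_inter_eq_integral hs hst
      (measurableSet_pastSigma_survivesThrough hB.1 hBM.cont s)]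
  simp_rw [uFun_eq_measure_survivesThrough hB hBM.cont hτ0 hs]

lemma survivesBefore_ae_eq_of_survival_eq (hB : IsBarrier B) (hBM : IsStandardBM P W)
    (hτ0 : ∀ᵐ ω ∂P, ((0 : ℝ) : EReal) < tauB B W ω) {s t : ℝ} (hs : 0 ≤ s) (hst : s < t)
    (hg : ∀ r ∈ Ico s t, survival P B W r = survival P B W s) :
    survivesBefore B W t =ᵐ[P] survivesThrough B W s := by
  obtain ⟨r, -, hr, hlim⟩ := exists_seq_strictMono_tendsto' hst
  rw [survivesBefore_eq_iInter (fun n => (hr n).2) hlim]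
  simpa only [iInter_const] using Filter.EventuallyEq.countable_iInter fun n =>
    survivesThrough_ae_eq_of_survival_eq hB hBM hτ0 hs (hr n).1.le (hg _ ⟨(hr n).1.le, (hr n).2⟩)

lemma uFun_eq_min_of_survival_eq (hB : IsBarrier B) (hBM : IsStandardBM P W)
    (hτ0 : ∀ᵐ ω ∂P, ((0 : ℝ) : EReal) < tauB B W ω) {s t : ℝ} (hs : 0 ≤ s) (hst : s < t)
    (hg : ∀ r ∈ Ico s t, survival P B W r = survival P B W s) (x : ℝ) :
    uFun P B W t x = min (∫ ω, uFun P B W s (x + W (t - s) ω) ∂P) (survival P B W t) := by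
  have ht : 0 < t := hs.trans_lt hst
  have hint : ∫ ω, uFun P B W s (x + W (t - s) ω) ∂P =
      (P ({ω | W t ω ≤ x} ∩ survivesBefore B W t)).toReal := by
    simp_rw [uFun_eq_measure_survivesThrough hB hBM.cont hτ0 hs]
    rw [measure_congr ((EventuallyEq.refl _ _).inter
        (survivesBefore_ae_eq_of_survival_eq hB hBM hτ0 hs hst hg)),
      hBM.measure_le_inter_eq_integral hs hst.le
        (measurableSet_pastSigma_survivesThrough hB.1 hBM.cont s)]
  rw [hint, survival_eq_measure_survivesThrough hB hBM.cont hτ0 ht.le,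
    uFun_eq_measure_survivesThrough hB hBM.cont hτ0 ht.le,
    ← ENNReal.toReal_min (measure_ne_top _ _) (measure_ne_top _ _)]
  congr 1
  rcases inter_survivesThrough_eq_or_subset hB ht x with h | h
  · rw [h, min_eq_left (h ▸ measure_mono inter_subset_right)]
  · have hsub : survivesThrough B W t ⊆ {ω | W t ω ≤ x} ∩ survivesBefore B W t :=
      fun _ hω => ⟨h hω, ((mem_survivesThrough_iff ht).1 hω).1⟩
    rw [inter_eq_right.2 h, min_eq_right (measure_mono hsub)]

lemma uFun_zero (hBM : IsStandardBM P W) (hτ0 : ∀ᵐ ω ∂P, ((0 : ℝ) : EReal) < tauB B W ω)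
    (x : ℝ) : uFun P B W 0 x = if 0 ≤ x then 1 else 0 := by
  have hae : {ω | W 0 ω ≤ x ∧ ((0 : ℝ) : EReal) < tauB B W ω} =ᵐ[P] {_ω | 0 ≤ x} := by
    rw [eventuallyEq_set]
    filter_upwards [hBM.init, hτ0] with ω h0 hτ
    simp only [h0, hτ, and_true]
  rw [uFun, measure_congr hae]
  split_ifs with hx <;> simp [hx]

end FirstPassage

/-- Theorem (inductive scheme for the discrete inverse first-passage problem):
if `g` is piecewise constant with division points `0 = t_0 < t_1 < ⋯ < t_N < ∞` and the
standard barrier `B` solves the inverse first-passage problem for `g`, then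
`u(t,x) = P(W_t ≤ x, τ_B > t)` satisfies the inductive scheme. -/
theorem discrete_forward_scheme
    {Ω : Type*} [MeasurableSpace Ω] (P : Measure Ω) [IsProbabilityMeasure P]
    (W : ℝ → Ω → ℝ) (hBM : IsStandardBM P W)
    (g : ℝ → ℝ) (hg : IsSurvival g)
    (N : ℕ) (ts : ℕ → ℝ) (hts0 : ts 0 = 0)
    (htsmono : ∀ k : ℕ, k < N → ts k < ts (k + 1))
    (hconst : ∀ k : ℕ, k < N → ∀ s : ℝ, ts k ≤ s → s < ts (k + 1) → g s = g (ts k))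
    (hlast : ∀ s : ℝ, ts N ≤ s → g s = g (ts N))
    (B : Set (ℝ × ℝ)) (hB : IsStandardBarrier B)
    (hsol : ∀ t : ℝ, 0 ≤ t → survival P B W t = g t) :
    (∀ x : ℝ, uFun P B W 0 x = if 0 ≤ x then 1 else 0) ∧
    (∀ k : ℕ, k ≤ N → ∀ t : ℝ, ts k < t → (k < N → t < ts (k + 1)) → ∀ x : ℝ,
      uFun P B W t x = ∫ ω, uFun P B W (ts k) (x + W (t - ts k) ω) ∂P) ∧
    (∀ k : ℕ, k < N → ∀ x : ℝ,
      uFun P B W (ts (k + 1)) x =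
        min (∫ ω, uFun P B W (ts k) (x + W (ts (k + 1) - ts k) ω) ∂P)
          (g (ts (k + 1)))) := by
  have hτ0 := ae_zero_lt_tauB hB.1 hBM (by rw [hsol 0 le_rfl, hg.init])
  have hts : ∀ k ≤ N, 0 ≤ ts k := by
    intro k hk
    induction k with
    | zero => exact hts0.ge
    | succ k ih => exact (ih (by omega)).trans (htsmono k hk).le
  refine ⟨uFun_zero hBM hτ0, fun k hk t hkt htk x => ?_, fun k hk x => ?_⟩
  · have hgt : g t = g (ts k) := by
      rcases hk.lt_or_eq with hk | rfl
      exacts [hconst k hk t hkt.le (htk hk), hlast t hkt.le]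
    refine uFun_eq_integral_of_survival_eq hB.1 hBM hτ0 (hts k hk) hkt.le ?_ x
    rw [hsol t ((hts k hk).trans hkt.le), hsol _ (hts k hk), hgt]
  · rw [← hsol _ (hts k hk.le |>.trans (htsmono k hk).le)]
    refine uFun_eq_min_of_survival_eq hB.1 hBM hτ0 (hts k hk.le) (htsmono k hk) (fun r hr => ?_) x
    rw [hsol r ((hts k hk.le).trans hr.1), hsol _ (hts k hk.le), hconst k hk r hr.1 hr.2]

end
end

section
/- Let g be a piecewise constant survival distribution function with division points 0 = t_0 < t_1 < ⋯ < t_N < t_{N+1} = ∞, fix t ≥ 0 and x ∈ ℝ, and let T̄[0,t] denote the set of stopping times of W taking values in {t − t_k : k ≥ 0} ∩ [0,t]. Then the optimal stopping value is not changed by restricting to T̄[0,t]: v(t,x) = inf_{γ ∈ T̄[0,t]} E[g(t−γ)·1{γ < t} + 1{γ = t, x + W_t ≥ 0}]. -/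
open MeasureTheory ProbabilityTheory Filter Set

noncomputable section

/-!
Round a stopping time `γ` up to the grid `{t - t_k}`, i.e. replace it by `δ = t - t_K` where
`t_K` is the largest division point not exceeding the remaining time `t - γ`. The event
`{δ ≤ u}` is the finite union of the events `{γ ≤ t - t_k}` with `t - t_k ≤ u`, so `δ` is again
a stopping time. Since `g` is constant on `[t_K, t_{K+1})`, we have `g (t - δ) = g (t - γ)`; when
`γ < δ = t` this common value is `g 0 = 1`, which dominates the terminal payoff. Hence the
payoff of `δ` is pointwise at most that of `γ`.
-/

section StoppingTime

variable {Ω : Type*} {m : MeasurableSpace Ω}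

theorem IsStoppingTime.of_le_iff_exists_mem {ι : Type*} [Preorder ι] {F : Filtration ι m}
    {τ σ : Ω → WithTop ι} (hτ : IsStoppingTime F τ) {G : Set ι} (hG : G.Countable)
    (hσ : ∀ ω (u : ι), σ ω ≤ u ↔ ∃ p ∈ G, p ≤ u ∧ τ ω ≤ p) :
    IsStoppingTime F σ := by
  intro u
  have hset : {ω | σ ω ≤ u} = ⋃ p ∈ G ∩ Iic u, {ω | τ ω ≤ p} := by
    ext ω
    simp [hσ, and_assoc]
  rw [hset]
  exact MeasurableSet.biUnion (hG.mono inter_subset_left) fun p hp => F.mono hp.2 _ (hτ p)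

theorem measurable_of_isStoppingTime_coe {F : Filtration ℝ m} {γ : Ω → ℝ}
    (hγ : IsStoppingTime F fun ω => (γ ω : WithTop ℝ)) : Measurable γ :=
  measurable_of_Iic fun u => F.le u _ (by simpa [preimage, WithTop.coe_le_coe] using hγ u)

end StoppingTime

section Grid

variable (ts : ℕ → ℝ) (N : ℕ)

open Classical in
def gridIndex (s : ℝ) : ℕ :=
  Nat.findGreatest (fun k => ts k ≤ s) N

/-- For monotone `ts`, the least point of the grid `{t - ts k : k ≤ N}` that is `≥ r`. -/
def gridCeil (t r : ℝ) : ℝ :=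
  t - ts (gridIndex ts N (t - r))

variable {ts N}

theorem gridIndex_le (s : ℝ) : gridIndex ts N s ≤ N :=
  Nat.findGreatest_le N

theorem ts_gridIndex_le {s : ℝ} (hs : ts 0 ≤ s) : ts (gridIndex ts N s) ≤ s :=
  Nat.findGreatest_spec (P := fun k => ts k ≤ s) (Nat.zero_le N) hs

theorem le_gridIndex {s : ℝ} {k : ℕ} (hk : k ≤ N) (hks : ts k ≤ s) : k ≤ gridIndex ts N s :=
  Nat.le_findGreatest hk hks

theorem apply_ts_gridIndex {g : ℝ → ℝ}
    (hconst : ∀ k < N, ∀ s, ts k ≤ s → s < ts (k + 1) → g s = g (ts k))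
    (hlast : ∀ s, ts N ≤ s → g s = g (ts N)) {s : ℝ} (hs : ts 0 ≤ s) :
    g (ts (gridIndex ts N s)) = g s := by
  rcases (gridIndex_le (ts := ts) s).lt_or_eq with hlt | heq
  · have hnext : s < ts (gridIndex ts N s + 1) := by
      by_contra! h
      exact (le_gridIndex hlt h).not_gt (Nat.lt_succ_self _)
    exact (hconst _ hlt s (ts_gridIndex_le hs) hnext).symm
  · have hle := ts_gridIndex_le (N := N) hs
    rw [heq] at hle ⊢
    exact (hlast s hle).symm

theorem le_gridCeil {t r : ℝ} (hr : ts 0 ≤ t - r) : r ≤ gridCeil ts N t r := by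
  have := ts_gridIndex_le (N := N) hr
  unfold gridCeil
  linarith

theorem gridCeil_le_self (hmono : MonotoneOn ts (Iic N)) (h0 : 0 ≤ ts 0) (t r : ℝ) :
    gridCeil ts N t r ≤ t := by
  have : ts 0 ≤ ts (gridIndex ts N (t - r)) :=
    hmono (mem_Iic.2 N.zero_le) (mem_Iic.2 (gridIndex_le _)) (Nat.zero_le _)
  unfold gridCeil
  linarith

theorem gridCeil_le_iff (hmono : MonotoneOn ts (Iic N)) {t r u : ℝ} (hr : ts 0 ≤ t - r) :
    gridCeil ts N t r ≤ u ↔ ∃ k ≤ N, t - ts k ≤ u ∧ r ≤ t - ts k := by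
  constructor
  · intro h
    exact ⟨_, gridIndex_le _, h, le_gridCeil hr⟩
  · rintro ⟨k, hk, hku, hrk⟩
    have hkK : ts k ≤ ts (gridIndex ts N (t - r)) :=
      hmono (mem_Iic.2 hk) (mem_Iic.2 (gridIndex_le _)) (le_gridIndex hk (by linarith))
    unfold gridCeil
    linarith

theorem apply_sub_gridCeil {g : ℝ → ℝ}
    (hconst : ∀ k < N, ∀ s, ts k ≤ s → s < ts (k + 1) → g s = g (ts k))
    (hlast : ∀ s, ts N ≤ s → g s = g (ts N)) {t r : ℝ} (hr : ts 0 ≤ t - r) :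
    g (t - gridCeil ts N t r) = g (t - r) := by
  rw [gridCeil, sub_sub_cancel]
  exact apply_ts_gridIndex hconst hlast hr

theorem isStoppingTime_gridCeil {Ω : Type*} {m : MeasurableSpace Ω} {F : Filtration ℝ m}
    (hmono : MonotoneOn ts (Iic N)) {t : ℝ} {γ : Ω → ℝ} (hγt : ∀ ω, ts 0 ≤ t - γ ω)
    (hγ : IsStoppingTime F fun ω => (γ ω : WithTop ℝ)) :
    IsStoppingTime F fun ω => (gridCeil ts N t (γ ω) : WithTop ℝ) := by
  refine IsStoppingTime.of_le_iff_exists_mem hγ ((finite_Iic N).image fun k => t - ts k).countable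
    fun ω u => ?_
  simp only [WithTop.coe_le_coe, gridCeil_le_iff hmono (hγt ω), mem_image, mem_Iic]
  aesop

end Grid

section Payoff

variable {Ω : Type*} {g : ℝ → ℝ} {W : ℝ → Ω → ℝ} {t x : ℝ} {γ δ : Ω → ℝ}

def stopPayoff (g : ℝ → ℝ) (W : ℝ → Ω → ℝ) (t x : ℝ) (γ : Ω → ℝ) (ω : Ω) : ℝ :=
  {ω' | γ ω' < t}.indicator (fun ω' => g (t - γ ω')) ω
    + {ω' | γ ω' = t ∧ 0 ≤ x + W t ω'}.indicator 1 ω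

theorem stopPayoff_mem_Icc (hg : ∀ s, 0 ≤ s → g s ∈ Icc 0 1) {ω : Ω} (hγt : γ ω ≤ t) :
    stopPayoff g W t x γ ω ∈ Icc 0 1 := by
  simp only [stopPayoff, indicator_apply, mem_ofPred_eq, Pi.one_apply]
  rcases hγt.lt_or_eq with hlt | heq
  · simpa [hlt, hlt.ne] using hg _ (sub_nonneg.2 hγt)
  · split_ifs <;> simp_all

theorem measurable_stopPayoff [MeasurableSpace Ω] (hg : AntitoneOn g (Ici 0))
    (hW : Measurable (W t)) (hγ : Measurable γ) (hγt : ∀ ω, γ ω ≤ t) :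
    Measurable (stopPayoff g W t x γ) := by
  have hg_max : Antitone fun s => g (max s 0) := fun a b hab =>
    hg (le_max_right a 0) (le_max_right b 0) (max_le_max_right 0 hab)
  have hgγ : (fun ω => g (t - γ ω)) = fun ω => g (max (t - γ ω) 0) := by
    funext ω
    rw [max_eq_left (sub_nonneg.2 (hγt ω))]
  refine Measurable.add ?_ (measurable_const.indicator ?_)
  · refine Measurable.indicator ?_ (measurableSet_lt hγ measurable_const)
    rw [hgγ]
    exact hg_max.measurable.comp (measurable_const.sub hγ)
  · exact (hγ (measurableSet_singleton t)).inter
      (measurableSet_le measurable_const (hW.const_add x))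

theorem integrable_stopPayoff [MeasurableSpace Ω] {P : Measure Ω} [IsFiniteMeasure P]
    (hg_anti : AntitoneOn g (Ici 0)) (hg_mem : ∀ s, 0 ≤ s → g s ∈ Icc 0 1)
    (hW : Measurable (W t)) (hγ : Measurable γ) (hγt : ∀ ω, γ ω ≤ t) :
    Integrable (stopPayoff g W t x γ) P :=
  .of_mem_Icc 0 1 (measurable_stopPayoff hg_anti hW hγ hγt).aemeasurable
    (ae_of_all _ fun ω => stopPayoff_mem_Icc hg_mem (hγt ω))

theorem integral_stopPayoff_nonneg [MeasurableSpace Ω] {P : Measure Ω}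
    (hg : ∀ s, 0 ≤ s → g s ∈ Icc 0 1) (hγt : ∀ ω, γ ω ≤ t) : 0 ≤ ∫ ω, stopPayoff g W t x γ ω ∂P :=
  integral_nonneg fun ω => (stopPayoff_mem_Icc hg (hγt ω)).1

theorem stopPayoff_le_of_apply_eq (hg_mem : ∀ s, 0 ≤ s → g s ∈ Icc 0 1) (hg0 : g 0 = 1) {ω : Ω}
    (hγδ : γ ω ≤ δ ω) (hδt : δ ω ≤ t) (hgδ : g (t - δ ω) = g (t - γ ω)) :
    stopPayoff g W t x δ ω ≤ stopPayoff g W t x γ ω := by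
  by_cases hγt : γ ω < t
  · have hγ_pay : stopPayoff g W t x γ ω = g (t - γ ω) := by simp [stopPayoff, hγt, hγt.ne]
    rw [hγ_pay, ← hgδ]
    rcases hδt.lt_or_eq with hδt | hδt
    · simp [stopPayoff, hδt, hδt.ne]
    · have hgδ_one : g (t - δ ω) = 1 := by rw [hδt, sub_self, hg0]
      exact hgδ_one ▸ (stopPayoff_mem_Icc hg_mem hδt.le).2
  · have hγt : γ ω = t := le_antisymm (hγδ.trans hδt) (not_lt.1 hγt)
    have hδt : δ ω = t := le_antisymm hδt (hγt ▸ hγδ)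
    simp [stopPayoff, indicator_apply, hγt, hδt]

end Payoff

/-- For piecewise constant `g`, restricting the optimal stopping problem to stopping
times with values in `{t - t_k : k ≥ 0} ∩ [0,t]` does not change the value. -/
theorem discrete_stopping_times_suffice
    {Ω : Type*} [MeasurableSpace Ω] (P : Measure Ω) [IsProbabilityMeasure P]
    (W : ℝ → Ω → ℝ) (hBM : IsStandardBM P W)
    (g : ℝ → ℝ) (hg : IsSurvival g)
    (N : ℕ) (ts : ℕ → ℝ) (hts0 : ts 0 = 0)
    (htsmono : ∀ k : ℕ, k < N → ts k < ts (k + 1))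
    (hconst : ∀ k : ℕ, k < N → ∀ s : ℝ, ts k ≤ s → s < ts (k + 1) → g s = g (ts k))
    (hlast : ∀ s : ℝ, ts N ≤ s → g s = g (ts N))
    (t x : ℝ) (ht : 0 ≤ t) :
    stopValue P W hBM.meas g t x =
      ⨅ γ : {γ : Ω → ℝ // IsStoppingTime (Filtration.natural W hBM.meas) (fun ω => (γ ω : WithTop ℝ)) ∧
          ∀ ω, (∃ k : ℕ, k ≤ N ∧ γ ω = t - ts k) ∧ γ ω ∈ Set.Icc 0 t},
        ∫ ω, ({ω' | γ.1 ω' < t}.indicator (fun ω' => g (t - γ.1 ω')) ω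
          + {ω' | γ.1 ω' = t ∧ 0 ≤ x + W t ω'}.indicator 1 ω) ∂P := by
  set F := Filtration.natural W hBM.meas
  have hmono : MonotoneOn ts (Iic N) := (strictMonoOn_Iic_of_lt_succ htsmono).monotoneOn
  have hconst_stop := isStoppingTime_const F t
  have hgrid : ∀ r ≤ t, ts 0 ≤ t - r := fun r hr => by linarith
  have hint : ∀ {γ : Ω → ℝ}, Measurable γ → (∀ ω, γ ω ≤ t) →
      Integrable (stopPayoff g W t x γ) P :=
    integrable_stopPayoff hg.mono hg.mem (hBM.meas t).measurable
  have : Nonempty {γ : Ω → ℝ // IsStoppingTime F (fun ω => (γ ω : WithTop ℝ)) ∧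
      ∀ ω, γ ω ∈ Icc 0 t} :=
    ⟨⟨fun _ => t, hconst_stop, fun _ => ⟨ht, le_rfl⟩⟩⟩
  have : Nonempty {γ : Ω → ℝ // IsStoppingTime F (fun ω => (γ ω : WithTop ℝ)) ∧
      ∀ ω, (∃ k ≤ N, γ ω = t - ts k) ∧ γ ω ∈ Icc 0 t} :=
    ⟨⟨fun _ => t, hconst_stop, fun _ => ⟨⟨0, N.zero_le, by rw [hts0, sub_zero]⟩, ht, le_rfl⟩⟩⟩
  apply le_antisymm
  · refine ciInf_mono_of_forall_exists ⟨0, ?_⟩ fun δ => ⟨⟨δ.1, δ.2.1, fun ω => (δ.2.2 ω).2⟩, le_rfl⟩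
    rintro _ ⟨γ, rfl⟩
    exact integral_stopPayoff_nonneg hg.mem fun ω => (γ.2.2 ω).2
  · refine ciInf_mono_of_forall_exists ⟨0, ?_⟩ fun ⟨γ, hγ, hγt⟩ => ?_
    · rintro _ ⟨δ, rfl⟩
      exact integral_stopPayoff_nonneg hg.mem fun ω => (δ.2.2 ω).2.2
    have hδ := isStoppingTime_gridCeil hmono (fun ω => hgrid _ (hγt ω).2) hγ
    have hδt : ∀ ω, gridCeil ts N t (γ ω) ∈ Icc 0 t := fun ω =>
      ⟨(hγt ω).1.trans (le_gridCeil (hgrid _ (hγt ω).2)), gridCeil_le_self hmono hts0.ge t _⟩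
    refine ⟨⟨_, hδ, fun ω => ⟨⟨_, gridIndex_le _, rfl⟩, hδt ω⟩⟩, ?_⟩
    refine integral_mono (hint (measurable_of_isStoppingTime_coe hδ) fun ω => (hδt ω).2)
      (hint (measurable_of_isStoppingTime_coe hγ) fun ω => (hγt ω).2) fun ω => ?_
    exact stopPayoff_le_of_apply_eq hg.mem hg.init (le_gridCeil (hgrid _ (hγt ω).2)) (hδt ω).2
      (apply_sub_gridCeil hconst hlast (hgrid _ (hγt ω).2))

end
end

section
/- Let (B_n)_{n≥1} and B be barriers such that τ_{B_n} → τ_B almost surely as n → ∞, and let t ≥ 0 be such that P(τ_{B_n} > t) → P(τ_B > t). Then u_n(t,x) → u(t,x) as n → ∞ for every x ∈ ℝ, where u_n(t,x) := P(W_t ≤ x, τ_{B_n} > t) and u(t,x) := P(W_t ≤ x, τ_B > t). -/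
open MeasureTheory ProbabilityTheory Filter Set

noncomputable section

/-!
Since `τ_{B_n} → τ_B` a.s. and `(t, ∞]` is open, almost every `ω` with `τ_B(ω) > t` has
`τ_{B_n}(ω) > t` for all large `n`. By Fatou's lemma for sets this gives
`liminf P(C, τ_{B_n} > t) ≥ P(C, τ_B > t)` for every set `C`, in particular for `C = {W_t ≤ x}`
and for its complement. The two lower bounds add up to `P(τ_{B_n} > t) → P(τ_B > t)`,
so neither can be strict in the limit.
-/

section

variable {Ω : Type*} [MeasurableSpace Ω] {μ : Measure Ω}

theorem eventually_lt_measure_of_ae_eventually_mem {s : Set Ω} {t : ℕ → Set Ω}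
    (h : ∀ᵐ ω ∂μ, ω ∈ s → ∀ᶠ n in atTop, ω ∈ t n) {c : ENNReal} (hc : c < μ s) :
    ∀ᶠ n in atTop, c < μ (t n) := by
  set T : ℕ → Set Ω := fun N => ⋂ k ≥ N, t k
  have hT_mono : Monotone T := fun M N hMN ω hω =>
    mem_iInter₂.2 fun k hk => mem_iInter₂.1 hω k (hMN.trans hk)
  have hs_le : μ s ≤ μ (⋃ N, T N) := by
    refine measure_mono_ae ?_
    filter_upwards [h] with ω hω hωs
    obtain ⟨N, hN⟩ := eventually_atTop.1 (hω hωs)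
    exact mem_iUnion.2 ⟨N, mem_iInter₂.2 hN⟩
  obtain ⟨N, hN⟩ := ((tendsto_measure_iUnion_atTop hT_mono).eventually
    (lt_mem_nhds (hc.trans_le hs_le))).exists_forall_of_atTop
  filter_upwards [eventually_ge_atTop N] with n hn
  exact (hN N le_rfl).trans_le (measure_mono (iInter₂_subset n hn))

theorem eventually_lt_measureReal_of_ae_eventually_mem [IsFiniteMeasure μ]
    {s : Set Ω} {t : ℕ → Set Ω} (h : ∀ᵐ ω ∂μ, ω ∈ s → ∀ᶠ n in atTop, ω ∈ t n)
    {c : ℝ} (hc : c < μ.real s) : ∀ᶠ n in atTop, c < μ.real (t n) := by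
  rcases lt_or_ge c 0 with hc0 | hc0
  · exact Eventually.of_forall fun n => hc0.trans_le measureReal_nonneg
  · filter_upwards [eventually_lt_measure_of_ae_eventually_mem h
      ((ENNReal.ofReal_lt_iff_lt_toReal hc0 (measure_ne_top μ s)).2 hc)] with n hn
    exact (ENNReal.ofReal_lt_iff_lt_toReal hc0 (measure_ne_top μ (t n))).1 hn

end

theorem tendsto_of_tendsto_add_of_eventually_gt {ι : Type*} {l : Filter ι} {a b : ι → ℝ}
    {α β : ℝ} (ha : ∀ c < α, ∀ᶠ i in l, c < a i) (hb : ∀ c < β, ∀ᶠ i in l, c < b i)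
    (hab : Tendsto (fun i => a i + b i) l (nhds (α + β))) : Tendsto a l (nhds α) := by
  refine tendsto_order.2 ⟨ha, fun c hc => ?_⟩
  have hε : 0 < (c - α) / 2 := by linarith
  filter_upwards [hb (β - (c - α) / 2) (by linarith),
    hab (Iio_mem_nhds (by linarith : α + β < α + β + (c - α) / 2))] with i hbi habi
  linarith [show a i + b i < α + β + (c - α) / 2 from habi]

theorem u_converges_general
    {Ω : Type*} [MeasurableSpace Ω] (P : Measure Ω) [IsProbabilityMeasure P]
    (W : ℝ → Ω → ℝ) (hBM : IsStandardBM P W)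
    (Bn : ℕ → Set (ℝ × ℝ))
    (B : Set (ℝ × ℝ))
    (hconv : ∀ᵐ ω ∂P, Tendsto (fun n => tauB (Bn n) W ω) atTop (nhds (tauB B W ω)))
    (t : ℝ)
    (hg : Tendsto (fun n => survival P (Bn n) W t) atTop (nhds (survival P B W t))) :
    ∀ x : ℝ, Tendsto (fun n => uFun P (Bn n) W t x) atTop (nhds (uFun P B W t x)) := by
  intro x
  set A : Set Ω := {ω | W t ω ≤ x}
  have hA : MeasurableSet A := measurableSet_le (hBM.meas t).measurable measurable_const
  set S : Set (ℝ × ℝ) → Set Ω := fun B' => {ω | (t : EReal) < tauB B' W ω}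
  have h_survive : ∀ C : Set Ω, ∀ᵐ ω ∂P, ω ∈ S B ∩ C → ∀ᶠ n in atTop, ω ∈ S (Bn n) ∩ C := by
    intro C
    filter_upwards [hconv] with ω hω hωS
    filter_upwards [hω.eventually (isOpen_Ioi.mem_nhds hωS.1)] with n hn using ⟨hn, hωS.2⟩
  have hu : ∀ B', uFun P B' W t x = P.real (S B' ∩ A) := fun B' => by
    rw [inter_comm]; rfl
  have h_split : ∀ B', survival P B' W t = P.real (S B' ∩ A) + P.real (S B' ∩ Aᶜ) :=
    fun B' => by rw [← sdiff_eq, measureReal_inter_add_sdiff hA]; rfl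
  simp only [hu]
  refine tendsto_of_tendsto_add_of_eventually_gt
    (fun c hc => eventually_lt_measureReal_of_ae_eventually_mem (h_survive A) hc)
    (fun c hc => eventually_lt_measureReal_of_ae_eventually_mem (h_survive Aᶜ) hc) ?_
  simpa only [h_split] using hg

/-- If `τ_{B_n} → τ_B` a.s. and `P(τ_{B_n} > t) → P(τ_B > t)`, then
`u_n(t,x) → u(t,x)` for every `x`. -/
theorem u_converges
    {Ω : Type*} [MeasurableSpace Ω] (P : Measure Ω) [IsProbabilityMeasure P]
    (W : ℝ → Ω → ℝ) (hBM : IsStandardBM P W)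
    (Bn : ℕ → Set (ℝ × ℝ)) (hBn : ∀ n, IsBarrier (Bn n))
    (B : Set (ℝ × ℝ)) (hB : IsBarrier B)
    (hconv : ∀ᵐ ω ∂P, Tendsto (fun n => tauB (Bn n) W ω) atTop (nhds (tauB B W ω)))
    (t : ℝ) (ht : 0 ≤ t)
    (hg : Tendsto (fun n => survival P (Bn n) W t) atTop (nhds (survival P B W t))) :
    ∀ x : ℝ, Tendsto (fun n => uFun P (Bn n) W t x) atTop (nhds (uFun P B W t x)) :=
  u_converges_general P W hBM Bn B hconv t hg

end
end
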